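/- arXiv:1804.02059 — 2 statements merged into one kernel-verified Lean document; each statement's English description precedes it below -/
import Mathlib

section
/- Define x̃_i := y_{i−1} λ_{i−1}(x,y,z)/λ_i(x,y,z) and ỹ_i := x_{i+1} λ_{i+1}(x,y,z)/λ_i(x,y,z) for all i ∈ ℤ/nℤ, and z̃ := z. Then λ_i(x̃, ỹ, z̃) = λ_i(x,y,z) for every i ∈ ℤ/nℤ. -/
/-!
Write `F j = λ_{i+j}` and let `S j` be the weight of the paths from `i` that cross after fewer
than `j` steps and stop `j` steps up, so that `S n = λ_i`. Splitting off the first or the last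
step of a path of `n + 1` steps gives `x_{a+1} λ_{a+1} = y_a λ_a + (∏ x - ∏ y) z_a`; iterated,
`(x_{i+1} ⋯ x_{i+j}) F j = (y_i ⋯ y_{i+j-1}) F 0 + (∏ x - ∏ y) S j`.
The products of the new weights telescope, `x̃_{i+1} ⋯ x̃_{i+j} = (y_i ⋯ y_{i+j-1}) F 0 / F j`
and `ỹ_{i+j+1} ⋯ ỹ_{i+n-1} = (x_{i+j+2} ⋯ x_{i+n}) F 0 / F (j+1)`, and eliminating `∏ x - ∏ y`
between the two relations shows that the `j`-th term of `λ_i(x̃, ỹ, z)` is `F 0 (T (j+1) - T j)`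
with `T m = (x_{i+m+1} ⋯ x_{i+n}) S m / F m`. The sum therefore telescopes to
`F 0 · S n / F n = F 0`.
-/

noncomputable section

/-- `λ_i(x,y,z)` for a cylindric 2-loop expanded directed plabic network with
white-to-black edge weights `x` (left string), `y` (right string) and crossing edge weights
`z`, all indexed by `ZMod n`:
`λ_i = Σ_{j=0}^{n-1} (∏_{k=1}^{j} x_{i+k}) · z_{i+j} · (∏_{k=j+1}^{n-1} y_{i+k})`. -/
def lam (n : ℕ) (x y z : ZMod n → ℝ) (i : ZMod n) : ℝ :=
  ∑ j ∈ Finset.range n,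
    (∏ k ∈ Finset.Icc 1 j, x (i + (k : ZMod n))) * z (i + (j : ZMod n)) *
      ∏ k ∈ Finset.Icc (j + 1) (n - 1), y (i + (k : ZMod n))

open Finset

theorem prod_Ico_div₀ {G : Type*} [CommGroupWithZero G] {f : ℕ → G} (hf : ∀ k, f k ≠ 0)
    {m n : ℕ} (hmn : m ≤ n) : ∏ k ∈ Ico m n, f (k + 1) / f k = f n / f m := by
  induction n, hmn using Nat.le_induction with
  | base => simp [hf]
  | succ n hmn ih => rw [prod_Ico_succ_top hmn, ih, mul_comm, div_mul_div_cancel₀ (hf n)]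

section PathSum

variable {R : Type*} [CommSemiring R] (u v w : ℕ → R)

def pathSum (m : ℕ) : R :=
  ∑ l ∈ range m, (∏ k ∈ Ico 1 (l + 1), u k) * w l * ∏ k ∈ Ico (l + 1) m, v k

@[simp]
theorem pathSum_zero : pathSum u v w 0 = 0 := by
  simp [pathSum]

theorem pathSum_succ (m : ℕ) :
    pathSum u v w (m + 1) = pathSum u v w m * v m + (∏ k ∈ Ico 1 (m + 1), u k) * w m := by
  rw [pathSum, sum_range_succ, Ico_self, prod_empty, mul_one, pathSum, sum_mul]
  congr 1
  refine sum_congr rfl fun l hl => ?_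
  rw [prod_Ico_succ_top (mem_range.1 hl)]
  ring

theorem pathSum_succ' (m : ℕ) :
    pathSum u v w (m + 1) = w 0 * ∏ k ∈ Ico 1 (m + 1), v k +
      u 1 * pathSum (fun k => u (k + 1)) (fun k => v (k + 1)) (fun k => w (k + 1)) m := by
  rw [pathSum, sum_range_succ', add_comm, pathSum, mul_sum]
  simp only [zero_add, Ico_self, prod_empty, one_mul]
  congr 1
  refine sum_congr rfl fun l _ => ?_
  rw [prod_eq_prod_Ico_succ_bot (by omega), prod_Ico_add' u 1 (l + 1) 1,
    prod_Ico_add' v (l + 1) m 1]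
  ring

end PathSum

section Cylinder

variable {n : ℕ}

theorem lam_eq_pathSum (x y z : ZMod n → ℝ) (a : ZMod n) :
    lam n x y z a = pathSum (fun k : ℕ => x (a + k)) (fun k : ℕ => y (a + k))
      (fun k : ℕ => z (a + k)) n := by
  refine sum_congr rfl fun l _ => ?_
  have hy : Icc (l + 1) (n - 1) = Ico (l + 1) n := by
    ext
    simp only [mem_Icc, mem_Ico]
    omega
  rw [hy, Ico_add_one_right_eq_Icc]

variable [NeZero n]

theorem prod_range_add_natCast_eq_prod_univ {M : Type*} [CommMonoid M] (g : ZMod n → M)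
    (a : ZMod n) : ∏ k ∈ range n, g (a + k) = ∏ c, g c := by
  refine prod_nbij' (fun k => a + k) (fun c => (c - a).val) (fun _ _ => mem_univ _)
    (fun c _ => mem_range.2 (ZMod.val_lt _)) (fun k hk => ?_) (fun c _ => ?_) fun _ _ => rfl
  · rw [add_sub_cancel_left, ZMod.val_natCast_of_lt (mem_range.1 hk)]
  · simp [ZMod.natCast_val, ZMod.cast_id]

theorem prod_Ico_one_add_natCast_eq_prod_univ {M : Type*} [CommMonoid M] (g : ZMod n → M)
    (a : ZMod n) : ∏ k ∈ Ico 1 (n + 1), g (a + k) = ∏ c, g c := by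
  rw [← prod_range_add_natCast_eq_prod_univ g (a + 1), range_eq_Ico, ← zero_add 1,
    ← prod_Ico_add' (fun k : ℕ => g (a + k))]
  exact prod_congr rfl fun k _ => by push_cast; ring_nf

theorem lam_pos {x y z : ZMod n → ℝ} (hx : ∀ i, 0 < x i) (hy : ∀ i, 0 < y i)
    (hz : ∀ i, 0 < z i) (a : ZMod n) : 0 < lam n x y z a :=
  sum_pos (fun _ _ => mul_pos (mul_pos (prod_pos fun _ _ => hx _) (hz _))
    (prod_pos fun _ _ => hy _)) (nonempty_range_iff.2 (NeZero.ne n))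

variable (x y z : ZMod n → ℝ) (a : ZMod n)

theorem mul_lam_add_one :
    x (a + 1) * lam n x y z (a + 1) = y a * lam n x y z a + (∏ c, x c - ∏ c, y c) * z a := by
  have hshift (f : ZMod n → ℝ) :
      (fun k : ℕ => f (a + ((k + 1 : ℕ) : ZMod n))) = fun k : ℕ => f (a + 1 + k) := by
    funext k
    push_cast
    ring_nf
  have hfirst := pathSum_succ' (fun k : ℕ => x (a + k)) (fun k : ℕ => y (a + k))
    (fun k : ℕ => z (a + k)) n
  have hlast := pathSum_succ (fun k : ℕ => x (a + k)) (fun k : ℕ => y (a + k))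
    (fun k : ℕ => z (a + k)) n
  simp only [hshift, ← lam_eq_pathSum, prod_Ico_one_add_natCast_eq_prod_univ,
    ZMod.natCast_self, Nat.cast_zero, Nat.cast_one, add_zero] at hfirst hlast
  linear_combination hlast - hfirst

theorem prod_mul_lam_add_natCast (j : ℕ) :
    (∏ k ∈ Ico 1 (j + 1), x (a + k)) * lam n x y z (a + j) =
      (∏ k ∈ range j, y (a + k)) * lam n x y z a + (∏ c, x c - ∏ c, y c) *
        pathSum (fun k : ℕ => x (a + k)) (fun k : ℕ => y (a + k)) (fun k : ℕ => z (a + k)) j := by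
  induction j with
  | zero => simp
  | succ j ih =>
    have hstep := mul_lam_add_one x y z (a + j)
    rw [add_assoc, ← Nat.cast_add_one] at hstep
    rw [prod_Ico_succ_top (by omega), prod_range_succ, pathSum_succ]
    linear_combination (∏ k ∈ Ico 1 (j + 1), x (a + k)) * hstep + y (a + j) * ih

theorem pathSum_succ_mul_lam_sub (j : ℕ) :
    pathSum (fun k : ℕ => x (a + k)) (fun k : ℕ => y (a + k)) (fun k : ℕ => z (a + k)) (j + 1) *
        lam n x y z (a + j) -
      x (a + (j + 1 : ℕ)) *
        pathSum (fun k : ℕ => x (a + k)) (fun k : ℕ => y (a + k)) (fun k : ℕ => z (a + k)) j *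
        lam n x y z (a + (j + 1 : ℕ)) =
      (∏ k ∈ range j, y (a + k)) * z (a + j) * lam n x y z a := by
  have hstep := mul_lam_add_one x y z (a + j)
  rw [add_assoc, ← Nat.cast_add_one] at hstep
  rw [pathSum_succ]
  linear_combination (-pathSum (fun k : ℕ => x (a + k)) (fun k : ℕ => y (a + k))
    (fun k : ℕ => z (a + k)) j) * hstep + z (a + j) * prod_mul_lam_add_natCast x y z a j

end Cylinder

section Tilde

variable {n : ℕ} {x y z : ZMod n → ℝ} (a : ZMod n)

theorem prod_Ico_one_xTilde {xt : ZMod n → ℝ}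
    (hxt : ∀ i, xt i = y (i - 1) * lam n x y z (i - 1) / lam n x y z i)
    (hlam : ∀ i, lam n x y z i ≠ 0) (j : ℕ) :
    ∏ k ∈ Ico 1 (j + 1), xt (a + k) =
      (∏ k ∈ range j, y (a + k)) * (lam n x y z a / lam n x y z (a + j)) := by
  have htel := prod_Ico_div₀ (f := fun k : ℕ => (lam n x y z (a + k))⁻¹) (by simp [hlam])
    (Nat.zero_le j)
  simp only [inv_div_inv, Nat.cast_zero, add_zero, ← range_eq_Ico] at htel
  rw [prod_Ico_eq_prod_range, Nat.add_sub_cancel, ← htel, ← prod_mul_distrib]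
  refine prod_congr rfl fun k _ => ?_
  rw [hxt, add_comm 1 k, Nat.cast_add_one, ← add_assoc, add_sub_cancel_right, mul_div_assoc]

theorem prod_Ico_yTilde {yt : ZMod n → ℝ}
    (hyt : ∀ i, yt i = x (i + 1) * lam n x y z (i + 1) / lam n x y z i)
    (hlam : ∀ i, lam n x y z i ≠ 0) {j : ℕ} (hj : j ≤ n) :
    ∏ k ∈ Ico j n, yt (a + k) =
      (∏ k ∈ Ico j n, x (a + (k + 1 : ℕ))) * (lam n x y z a / lam n x y z (a + j)) := by
  have htel := prod_Ico_div₀ (f := fun k : ℕ => lam n x y z (a + k)) (by simp [hlam]) hj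
  simp only [ZMod.natCast_self, add_zero] at htel
  rw [← htel, ← prod_mul_distrib]
  refine prod_congr rfl fun k _ => ?_
  rw [hyt, add_assoc, ← Nat.cast_add_one, mul_div_assoc]

end Tilde

/-- with `x̃_i := y_{i−1} λ_{i−1}/λ_i`, `ỹ_i := x_{i+1} λ_{i+1}/λ_i` and
`z̃ := z`, one has `λ_i(x̃, ỹ, z̃) = λ_i(x, y, z)` for every `i`. -/
theorem lam_tilde_eq (n : ℕ) [NeZero n] (x y z : ZMod n → ℝ)
    (hx : ∀ i, 0 < x i) (hy : ∀ i, 0 < y i) (hz : ∀ i, 0 < z i)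
    (xt yt : ZMod n → ℝ)
    (hxt : ∀ i, xt i = y (i - 1) * lam n x y z (i - 1) / lam n x y z i)
    (hyt : ∀ i, yt i = x (i + 1) * lam n x y z (i + 1) / lam n x y z i)
    (i : ZMod n) :
    lam n xt yt z i = lam n x y z i := by
  have hlam : ∀ a, lam n x y z a ≠ 0 := fun a => (lam_pos hx hy hz a).ne'
  set T : ℕ → ℝ := fun m => (∏ k ∈ Ico m n, x (i + (k + 1 : ℕ))) *
    pathSum (fun k : ℕ => x (i + k)) (fun k : ℕ => y (i + k)) (fun k : ℕ => z (i + k)) m /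
      lam n x y z (i + m)
  calc lam n xt yt z i = ∑ j ∈ range n, lam n x y z i * (T (j + 1) - T j) := by
        rw [lam_eq_pathSum, pathSum]
        refine sum_congr rfl fun j hj => ?_
        have hj : j < n := mem_range.1 hj
        rw [prod_Ico_one_xTilde i hxt hlam, prod_Ico_yTilde i hyt hlam (j := j + 1) hj]
        have h0 := hlam (i + j)
        have h1 := hlam (i + (j + 1 : ℕ))
        simp only [T]
        rw [prod_eq_prod_Ico_succ_bot hj]
        field_simp
        linear_combination (-lam n x y z i * ∏ k ∈ Ico (j + 1) n, x (i + (k + 1 : ℕ))) *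
          pathSum_succ_mul_lam_sub x y z i j
    _ = lam n x y z i * (T n - T 0) := by rw [← mul_sum, sum_range_sub]
    _ = lam n x y z i := by simp [T, hlam, ← lam_eq_pathSum]
end
end

section
/- For a spider web quiver, τ is an involution on the y-variables: applying the mutation-and-transposition sequence τ twice returns every y-variable to its original value. -/
noncomputable section

/-! ### Cluster mutation machinery -/

section Mutation

variable {V : Type*} [DecidableEq V] [Fintype V]

/-- Quiver mutation at a vertex `k`, acting on the skew-symmetric adjacency matrix `B`
(where `B i j` is the number of arrows `i → j` minus the number of arrows `j → i`;
a quiver with no loops and no directed 2-cycles is determined by this matrix). -/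
def mutB (B : V → V → ℤ) (k : V) : V → V → ℤ := fun i j =>
  if i = k ∨ j = k then -B i j
  else B i j + max (B i k) 0 * max (B k j) 0 - max (-B i k) 0 * max (-B k j) 0

/-- Cluster `x`-variable mutation at a vertex `k`:
`x_k ↦ (∏_{arrows k → j} x_j + ∏_{arrows j → k} x_j) / x_k`, other variables fixed. -/
def mutX (B : V → V → ℤ) (k : V) (x : V → ℝ) : V → ℝ := fun i =>
  if i = k then ((∏ j, x j ^ (B k j).toNat) + ∏ j, x j ^ (B j k).toNat) / x k else x i

/-- `y`-variable mutation at a vertex `k`: `y_k ↦ y_k⁻¹`, and for `i ≠ k` the variable `y_i`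
is multiplied by `(1+y_k⁻¹)^{-e}` if there are `e > 0` arrows `k → i` and by `(1+y_k)^{e}`
if there are `e > 0` arrows `i → k`. -/
def mutY (B : V → V → ℤ) (k : V) (y : V → ℝ) : V → ℝ := fun i =>
  if i = k then (y k)⁻¹
  else y i * (1 + y k) ^ (B i k).toNat / (1 + (y k)⁻¹) ^ (B k i).toNat

/-- One seed mutation step for `x`-seeds (quiver together with `x`-variables). -/
def stepX (s : (V → V → ℤ) × (V → ℝ)) (k : V) : (V → V → ℤ) × (V → ℝ) :=
  (mutB s.1 k, mutX s.1 k s.2)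

/-- One seed mutation step for `y`-seeds (quiver together with `y`-variables). -/
def stepY (s : (V → V → ℤ) × (V → ℝ)) (k : V) : (V → V → ℤ) × (V → ℝ) :=
  (mutB s.1 k, mutY s.1 k s.2)

/-- Relabelling a quiver by a permutation of the vertices. -/
def relabelB (σ : Equiv.Perm V) (B : V → V → ℤ) : V → V → ℤ := fun i j => B (σ i) (σ j)

/-- Relabelling a seed by a permutation of the vertices. -/
def relabelSeed (σ : Equiv.Perm V) (s : (V → V → ℤ) × (V → ℝ)) :
    (V → V → ℤ) × (V → ℝ) :=
  (relabelB σ s.1, fun i => s.2 (σ i))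

end Mutation

/-! ### Spider web quivers with three circles

The vertex set consists of a middle circle with `n` vertices, an outer circle with `m`
vertices and an inner circle with `l` vertices; the vertex of the middle circle with
(1-based) label `i` is `Sum.inl (i-1 : ZMod n)`, and similarly for the other two circles,
so that the counterclockwise circle arrows are `v → v + 1`.  The arrows between adjacent
circles form alternating zig-zag cycles
`⋯ → oA t → aA t → oA (t-1) → aA (t-1) → ⋯` (outer/middle, where `aA` lists the middle
vertices attached to the outer circle and `oA` the outer vertices attached to the middle
circle, both in increasing label order) and similarly `aB`, `oB` for inner/middle. -/

/-- Vertex set of a three-circle spider web quiver. -/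
abbrev SWV (n m l : ℕ) := ZMod n ⊕ ZMod m ⊕ ZMod l

/-- The middle-circle vertex with 1-based label `i` (read cyclically, so label `n` = label `0`). -/
def midV (n m l : ℕ) [NeZero n] (i : ℕ) : SWV n m l :=
  Sum.inl (((i + (n - 1) : ℕ) : ZMod n))

/-- The outer-circle vertex with 1-based label `i` (read cyclically). -/
def outV (n m l : ℕ) [NeZero m] (i : ℕ) : SWV n m l :=
  Sum.inr (Sum.inl (((i + (m - 1) : ℕ) : ZMod m)))

/-- The inner-circle vertex with 1-based label `i` (read cyclically). -/
def innV (n m l : ℕ) [NeZero l] (i : ℕ) : SWV n m l :=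
  Sum.inr (Sum.inr (((i + (l - 1) : ℕ) : ZMod l)))

/-- The number of arrows `u → v` in the spider web quiver with attachment data
`aA, oA, aB, oB`. -/
def swArr (n m l fA fB : ℕ) [NeZero n] [NeZero m] [NeZero l] [NeZero fA] [NeZero fB]
    (aA : Fin fA → ZMod n) (oA : Fin fA → ZMod m)
    (aB : Fin fB → ZMod n) (oB : Fin fB → ZMod l) (u v : SWV n m l) : ℕ :=
  (if ∃ i : ZMod n, u = Sum.inl i ∧ v = Sum.inl (i + 1) then 1 else 0) +
  (if ∃ j : ZMod m, u = Sum.inr (Sum.inl j) ∧ v = Sum.inr (Sum.inl (j + 1)) then 1 else 0) +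
  (if ∃ k : ZMod l, u = Sum.inr (Sum.inr k) ∧ v = Sum.inr (Sum.inr (k + 1)) then 1 else 0) +
  (if ∃ t : Fin fA, u = Sum.inr (Sum.inl (oA t)) ∧ v = Sum.inl (aA t) then 1 else 0) +
  (if ∃ t : Fin fA, u = Sum.inl (aA t) ∧ v = Sum.inr (Sum.inl (oA (t - 1))) then 1 else 0) +
  (if ∃ t : Fin fB, u = Sum.inr (Sum.inr (oB t)) ∧ v = Sum.inl (aB t) then 1 else 0) +
  (if ∃ t : Fin fB, u = Sum.inl (aB t) ∧ v = Sum.inr (Sum.inr (oB (t - 1))) then 1 else 0)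

/-- The (skew-symmetric) adjacency matrix of the spider web quiver. -/
def swB (n m l fA fB : ℕ) [NeZero n] [NeZero m] [NeZero l] [NeZero fA] [NeZero fB]
    (aA : Fin fA → ZMod n) (oA : Fin fA → ZMod m)
    (aB : Fin fB → ZMod n) (oB : Fin fB → ZMod l) (u v : SWV n m l) : ℤ :=
  (swArr n m l fA fB aA oA aB oB u v : ℤ) - swArr n m l fA fB aA oA aB oB v u

/-- The combinatorial conditions making the attachment data a genuine (three-circle)
spider web quiver: every circle carries at least the required number of vertices, there are
at least two attachments between adjacent circles (each face between circles is an oriented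
cycle with exactly two between-circle arrows and at least 3 sides), the attachment maps are
strictly increasing for the label order on each circle, and the labelling convention of the
paper holds: the outer (resp. inner) vertex `1⁻` (resp. `1⁺`) is the one whose arrow points
at the smallest middle vertex connected to the outer (resp. inner) circle. -/
structure IsSpiderWeb (n m l fA fB : ℕ) [NeZero n] [NeZero m] [NeZero l] [NeZero fA]
    [NeZero fB] (aA : Fin fA → ZMod n) (oA : Fin fA → ZMod m)
    (aB : Fin fB → ZMod n) (oB : Fin fB → ZMod l) : Prop where
  hn : 3 ≤ n
  hm : 2 ≤ m
  hl : 2 ≤ l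
  hfA : 2 ≤ fA
  hfB : 2 ≤ fB
  monoAA : StrictMono fun t => (aA t).val
  monoOA : StrictMono fun t => (oA t).val
  monoAB : StrictMono fun t => (aB t).val
  monoOB : StrictMono fun t => (oB t).val
  convA : oA 0 = 0
  convB : oB 0 = 0

/-- The middle-circle vertices `1, 2, …, n` in order (the mutation sequence `μ_n ⋯ μ_2 μ_1`
applied on the left of a seed corresponds to folding over this list). -/
def upList (n m l : ℕ) [NeZero n] : List (SWV n m l) :=
  (List.range n).map fun i => (Sum.inl ((i : ZMod n)) : SWV n m l)

/-- The middle-circle vertices `n-2, …, 2, 1` in order. -/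
def downList (n m l : ℕ) [NeZero n] : List (SWV n m l) :=
  ((List.range (n - 2)).reverse).map fun i => (Sum.inl ((i : ZMod n)) : SWV n m l)

/-- The transposition `s_{n-1,n}` of the middle-circle vertices `n-1` and `n`. -/
def swapPerm (n m l : ℕ) [NeZero n] [NeZero m] [NeZero l] : Equiv.Perm (SWV n m l) :=
  Equiv.swap (Sum.inl (((n - 2 : ℕ) : ZMod n))) (Sum.inl (((n - 1 : ℕ) : ZMod n)))

/-- `τ = μ₁ μ₂ ⋯ μ_{n-2} ∘ s_{n-1,n} ∘ μ_n μ_{n-1} ⋯ μ₁` acting on quivers. -/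
def tauB (n m l : ℕ) [NeZero n] [NeZero m] [NeZero l]
    (B : SWV n m l → SWV n m l → ℤ) : SWV n m l → SWV n m l → ℤ :=
  (downList n m l).foldl mutB (relabelB (swapPerm n m l) ((upList n m l).foldl mutB B))

/-- `τ` acting on `x`-seeds. -/
def tauX (n m l : ℕ) [NeZero n] [NeZero m] [NeZero l]
    (s : (SWV n m l → SWV n m l → ℤ) × (SWV n m l → ℝ)) :
    (SWV n m l → SWV n m l → ℤ) × (SWV n m l → ℝ) :=
  (downList n m l).foldl stepX (relabelSeed (swapPerm n m l) ((upList n m l).foldl stepX s))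

/-- `τ` acting on `y`-seeds. -/
def tauY (n m l : ℕ) [NeZero n] [NeZero m] [NeZero l]
    (s : (SWV n m l → SWV n m l → ℤ) × (SWV n m l → ℝ)) :
    (SWV n m l → SWV n m l → ℤ) × (SWV n m l → ℝ) :=
  (downList n m l).foldl stepY (relabelSeed (swapPerm n m l) ((upList n m l).foldl stepY s))

/-! ### Auxiliary lemmas for the proof -/

section Aux

variable {V : Type*} [DecidableEq V] [Fintype V]

/-- A good `y`-seed: skew-symmetric matrix and positive `y`-variables. -/
def GoodSeed (s : (V → V → ℤ) × (V → ℝ)) : Prop :=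
  (∀ i j, s.1 j i = -s.1 i j) ∧ ∀ v, 0 < s.2 v

lemma mutB_eq_of_not {B : V → V → ℤ} {k i j : V} (h : ¬(i = k ∨ j = k)) :
    mutB B k i j =
      B i j + max (B i k) 0 * max (B k j) 0 - max (-B i k) 0 * max (-B k j) 0 :=
  if_neg h

lemma mutB_mutB (B : V → V → ℤ) (k : V) : mutB (mutB B k) k = B := by
  funext i j
  by_cases h : i = k ∨ j = k
  · simp [mutB, h]
  · have e1 : mutB B k i k = -B i k := by simp [mutB]
    have e2 : mutB B k k j = -B k j := by simp [mutB]
    rw [mutB_eq_of_not h, mutB_eq_of_not h, e1, e2, neg_neg, neg_neg]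
    ring

lemma skew_mutB {B : V → V → ℤ} (hB : ∀ i j, B j i = -B i j) (k : V) :
    ∀ i j, mutB B k j i = -mutB B k i j := by
  intro i j
  by_cases h : i = k ∨ j = k
  · have h' : j = k ∨ i = k := h.symm
    simp only [mutB, if_pos h, if_pos h']
    rw [hB]
  · have h' : ¬(j = k ∨ i = k) := by tauto
    rw [mutB_eq_of_not h, mutB_eq_of_not h', hB i j, hB k j, hB i k, neg_neg, neg_neg]
    ring

lemma mutY_pos {B : V → V → ℤ} {k : V} {y : V → ℝ} (hy : ∀ v, 0 < y v) :
    ∀ v, 0 < mutY B k y v := by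
  intro v
  have hk := hy k
  have h1 : (0 : ℝ) < 1 + y k := by linarith
  have h2 : (0 : ℝ) < 1 + (y k)⁻¹ := by
    have := inv_pos.mpr hk; linarith
  unfold mutY
  split
  · exact inv_pos.mpr hk
  · exact div_pos (mul_pos (hy v) (pow_pos h1 _)) (pow_pos h2 _)

lemma goodSeed_stepY {s : (V → V → ℤ) × (V → ℝ)} (hs : GoodSeed s) (k : V) :
    GoodSeed (stepY s k) :=
  ⟨skew_mutB hs.1 k, mutY_pos hs.2⟩

lemma goodSeed_foldl {s : (V → V → ℤ) × (V → ℝ)} (hs : GoodSeed s) (L : List V) :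
    GoodSeed (L.foldl stepY s) := by
  induction L generalizing s with
  | nil => exact hs
  | cons a L ih => exact ih (goodSeed_stepY hs a)

lemma goodSeed_relabel {s : (V → V → ℤ) × (V → ℝ)} (hs : GoodSeed s) (σ : Equiv.Perm V) :
    GoodSeed (relabelSeed σ s) :=
  ⟨fun i j => hs.1 _ _, fun v => hs.2 _⟩

lemma stepY_stepY {s : (V → V → ℤ) × (V → ℝ)} (hs : GoodSeed s) (k : V) :
    stepY (stepY s k) k = s := by
  obtain ⟨B, y⟩ := s
  obtain ⟨hB, hy⟩ := hs
  simp only [stepY] at *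
  refine Prod.ext (mutB_mutB B k) ?_
  funext i
  by_cases hik : i = k
  · subst hik
    simp [mutY, inv_inv]
  · have hk := hy k
    have hk0 : y k ≠ 0 := ne_of_gt hk
    have h1 : (1 : ℝ) + y k ≠ 0 := by positivity
    have h2 : (1 : ℝ) + (y k)⁻¹ ≠ 0 := by positivity
    have e1 : mutB B k i k = -B i k := by simp [mutB]
    have e2 : mutB B k k i = -B k i := by simp [mutB]
    have eyk : mutY B k y k = (y k)⁻¹ := by simp [mutY]
    have eyi : mutY B k y i =
        y i * (1 + y k) ^ (B i k).toNat / (1 + (y k)⁻¹) ^ (B k i).toNat := by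
      simp [mutY, hik]
    show mutY (mutB B k) k (mutY B k y) i = y i
    rw [show mutY (mutB B k) k (mutY B k y) i =
        mutY B k y i * (1 + mutY B k y k) ^ (mutB B k i k).toNat /
          (1 + (mutY B k y k)⁻¹) ^ (mutB B k k i).toNat by simp [mutY, hik]]
    rw [eyk, eyi, e1, e2, inv_inv, hB k i, neg_neg]
    field_simp

lemma stepY_relabelSeed (σ : Equiv.Perm V) (u : (V → V → ℤ) × (V → ℝ)) (k : V) :
    stepY (relabelSeed σ u) k = relabelSeed σ (stepY u (σ k)) := by
  obtain ⟨B, y⟩ := u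
  refine Prod.ext ?_ ?_
  · funext i j
    show mutB (relabelB σ B) k i j = mutB B (σ k) (σ i) (σ j)
    simp only [mutB, relabelB]
    have hc : (i = k ∨ j = k) ↔ (σ i = σ k ∨ σ j = σ k) := by
      simp [σ.injective.eq_iff]
    rw [if_congr hc rfl rfl]
  · funext i
    show mutY (relabelB σ B) k (fun i => y (σ i)) i = mutY B (σ k) y (σ i)
    simp only [mutY, relabelB]
    rw [if_congr (by simp [σ.injective.eq_iff] : (i = k) ↔ (σ i = σ k)) rfl rfl]

lemma foldl_reverse_cancel (L : List V) {s : (V → V → ℤ) × (V → ℝ)} (hs : GoodSeed s) :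
    List.foldl stepY (List.foldl stepY s L.reverse) L = s := by
  induction L generalizing s with
  | nil => rfl
  | cons a L ih =>
      rw [List.reverse_cons, List.foldl_append]
      have : List.foldl stepY (List.foldl stepY s L.reverse) [a] =
          stepY (List.foldl stepY s L.reverse) a := rfl
      rw [this, List.foldl_cons, stepY_stepY (goodSeed_foldl hs L.reverse) a]
      exact ih hs

end Aux

/-- for a spider web quiver, `τ` is an involution on the `y`-variables:
applying the mutation-and-transposition sequence `τ` twice to the initial `y`-seed returns
every `y`-variable to its original value. -/
theorem tau_involution_y (n m l fA fB : ℕ)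
    [NeZero n] [NeZero m] [NeZero l] [NeZero fA] [NeZero fB]
    (aA : Fin fA → ZMod n) (oA : Fin fA → ZMod m)
    (aB : Fin fB → ZMod n) (oB : Fin fB → ZMod l)
    (hsw : IsSpiderWeb n m l fA fB aA oA aB oB)
    (y : SWV n m l → ℝ) (hy : ∀ v, 0 < y v) :
    (tauY n m l (tauY n m l (swB n m l fA fB aA oA aB oB, y))).2 = y := by
  have hn : 3 ≤ n := hsw.hn
  set f : ℕ → SWV n m l := fun i => (Sum.inl ((i : ZMod n)) : SWV n m l) with hf
  set P : List (SWV n m l) := (List.range (n - 2)).map f with hP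
  set σ : Equiv.Perm (SWV n m l) := swapPerm n m l with hσdef
  set s₀ : (SWV n m l → SWV n m l → ℤ) × (SWV n m l → ℝ) :=
    (swB n m l fA fB aA oA aB oB, y) with hs₀
  have hgood : GoodSeed s₀ := by
    constructor
    · intro i j
      show swB n m l fA fB aA oA aB oB j i = -swB n m l fA fB aA oA aB oB i j
      simp only [swB]; ring
    · exact hy
  -- decomposition of the lists
  have hup : upList n m l = P ++ [f (n - 2), f (n - 2 + 1)] := by
    have hq : n - 2 + 1 + 1 = n := by omega
    have hR : List.range n = List.range (n - 2) ++ [n - 2, n - 2 + 1] := by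
      conv_lhs => rw [← hq]
      rw [List.range_succ, List.range_succ]
      simp
    have hupchar : upList n m l =
        (List.range n).map (fun i : ℕ => (Sum.inl ((i : ZMod n)) : SWV n m l)) := by
      rw [upList]
      induction (List.range n) with
      | nil => rfl
      | cons a t ih => simpa using ih
    rw [← hf] at hupchar
    rw [hupchar, hP, hR, List.map_append]
    rfl
  have hdown : downList n m l = P.reverse := by
    have hdownchar : downList n m l =
        ((List.range (n - 2)).reverse).map
          (fun i : ℕ => (Sum.inl ((i : ZMod n)) : SWV n m l)) := by
      rw [downList]
      induction ((List.range (n - 2)).reverse) with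
      | nil => rfl
      | cons a t ih => simpa using ih
    rw [← hf] at hdownchar
    rw [hdownchar, hP]
    exact List.map_reverse ..
  -- swap facts
  have hcast : ((n - 2 + 1 : ℕ) : ZMod n) = ((n - 1 : ℕ) : ZMod n) := by
    congr 1; omega
  have hσ1 : σ (f (n - 2)) = f (n - 2 + 1) := by
    show swapPerm n m l (f (n - 2)) = f (n - 2 + 1)
    unfold swapPerm
    rw [show f (n - 2) = (Sum.inl (((n - 2 : ℕ) : ZMod n)) : SWV n m l) from rfl]
    rw [Equiv.swap_apply_left]
    simp [hf, hcast]
  have hσ2 : σ (f (n - 2 + 1)) = f (n - 2) := by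
    show swapPerm n m l (f (n - 2 + 1)) = f (n - 2)
    unfold swapPerm
    rw [show f (n - 2 + 1) = (Sum.inl (((n - 1 : ℕ) : ZMod n)) : SWV n m l) by
      simp [hf, hcast]]
    rw [Equiv.swap_apply_right]
  have hσσ : ∀ s : (SWV n m l → SWV n m l → ℤ) × (SWV n m l → ℝ),
      relabelSeed σ (relabelSeed σ s) = s := by
    intro s
    refine Prod.ext ?_ ?_
    · funext i j
      show s.1 (σ (σ i)) (σ (σ j)) = s.1 i j
      rw [hσdef]
      unfold swapPerm
      rw [Equiv.swap_apply_self, Equiv.swap_apply_self]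
    · funext i
      show s.2 (σ (σ i)) = s.2 i
      rw [hσdef]
      unfold swapPerm
      rw [Equiv.swap_apply_self]
  -- abbreviations for intermediate seeds
  set s₁ : (SWV n m l → SWV n m l → ℤ) × (SWV n m l → ℝ) :=
    List.foldl stepY s₀ P with hs₁
  have hg1 : GoodSeed s₁ := goodSeed_foldl hgood P
  set s₂ : (SWV n m l → SWV n m l → ℤ) × (SWV n m l → ℝ) :=
    stepY (stepY s₁ (f (n - 2))) (f (n - 2 + 1)) with hs₂
  have hg1' : GoodSeed (stepY s₁ (f (n - 2))) := goodSeed_stepY hg1 _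
  have hg2 : GoodSeed s₂ := goodSeed_stepY hg1' _
  have hupfold : ∀ s : (SWV n m l → SWV n m l → ℤ) × (SWV n m l → ℝ),
      List.foldl stepY s (upList n m l) =
        stepY (stepY (List.foldl stepY s P) (f (n - 2))) (f (n - 2 + 1)) := by
    intro s
    rw [hup, List.foldl_append]
    rfl
  have htau : ∀ s : (SWV n m l → SWV n m l → ℤ) × (SWV n m l → ℝ),
      tauY n m l s =
        List.foldl stepY (relabelSeed σ (List.foldl stepY s (upList n m l))) P.reverse := by
    intro s
    rw [tauY, hdown, hσdef]
  -- first application of τ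
  have h1 : tauY n m l s₀ = List.foldl stepY (relabelSeed σ s₂) P.reverse := by
    rw [htau, hupfold]
  -- second application of τ
  have hA : List.foldl stepY (tauY n m l s₀) P = relabelSeed σ s₂ := by
    rw [h1]
    have := foldl_reverse_cancel (V := SWV n m l) P (goodSeed_relabel hg2 σ)
    exact this
  have hB : stepY (relabelSeed σ s₂) (f (n - 2)) =
      relabelSeed σ (stepY s₁ (f (n - 2))) := by
    rw [stepY_relabelSeed, hσ1, hs₂, stepY_stepY hg1' _]
  have hC : stepY (relabelSeed σ (stepY s₁ (f (n - 2)))) (f (n - 2 + 1)) =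
      relabelSeed σ s₁ := by
    rw [stepY_relabelSeed, hσ2, stepY_stepY hg1 _]
  have hfold2 : List.foldl stepY (tauY n m l s₀) (upList n m l) = relabelSeed σ s₁ := by
    rw [hupfold, hA, hB, hC]
  have hfinal : tauY n m l (tauY n m l s₀) = s₀ := by
    rw [htau, hfold2, hσσ, hs₁]
    have h := foldl_reverse_cancel (V := SWV n m l) P.reverse (s := s₀) hgood
    rw [List.reverse_reverse] at h
    exact h
  rw [hfinal]
end
end
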